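/- Let κ = algebraMap ℝ 𝔠ₙ x + ι v be a paravector with v ≠ 0. Then for every m ∈ ℕ, (1 ⊗ₜ κ)^m = s₊(κ)^m • ι₊(κ) + s₋(κ)^m • ι₋(κ) in 𝔎ₙ. Consequently, for every N ∈ ℕ and coefficients a₀, …, a_N ∈ 𝔠ₙ, setting P(s) = Σ_{m=0}^{N} s^m • (1 ⊗ₜ a_m) for s ∈ ℂ, one has Σ_{m=0}^{N} (1 ⊗ₜ a_m) * (1 ⊗ₜ κ)^m = P(s₊(κ)) * ι₊(κ) + P(s₋(κ)) * ι₋(κ). -/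

import Mathlib

/-!
With `𝔰 = ι(v / ‖v‖)` we have `𝔰² = -1` and `1 ⊗ κ = x + ‖v‖ (1 ⊗ 𝔰)`. Whenever `a² = -1` in the
scalars and `u² = -1`, the elements `(1 ∓ a u) / 2` are complete orthogonal idempotents and
`c + r u = (c + r a) (1 - a u) / 2 + (c - r a) (1 + a u) / 2`. Powers and polynomials of a linear
combination of complete orthogonal idempotents are computed coefficientwise; take `a = i`.
-/

open scoped TensorProduct

/-- The paravector `κ = x + ι v` in the Clifford algebra. -/
noncomputable def paravec {n : ℕ} (Q : QuadraticForm ℝ (EuclideanSpace ℝ (Fin n)))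
    (x : ℝ) (v : EuclideanSpace ℝ (Fin n)) : CliffordAlgebra Q :=
  algebraMap ℝ (CliffordAlgebra Q) x + CliffordAlgebra.ι Q v

/-- The eigenvalue `s₊(κ) = x + i‖v‖`. -/
noncomputable def sPlus {n : ℕ} (x : ℝ) (v : EuclideanSpace ℝ (Fin n)) : ℂ :=
  (x : ℂ) + ‖v‖ * Complex.I

/-- The eigenvalue `s₋(κ) = x - i‖v‖`. -/
noncomputable def sMinus {n : ℕ} (x : ℝ) (v : EuclideanSpace ℝ (Fin n)) : ℂ :=
  (x : ℂ) - ‖v‖ * Complex.I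

/-- The idempotent `ι₊(κ) = (1/2) • (1 - i • (1 ⊗ 𝔰_κ))` in the complexification. -/
noncomputable def iotaP {n : ℕ} (Q : QuadraticForm ℝ (EuclideanSpace ℝ (Fin n)))
    (v : EuclideanSpace ℝ (Fin n)) : ℂ ⊗[ℝ] CliffordAlgebra Q :=
  (1/2 : ℝ) • (1 - Complex.I • ((1 : ℂ) ⊗ₜ[ℝ] CliffordAlgebra.ι Q (‖v‖⁻¹ • v)))

/-- The idempotent `ι₋(κ) = (1/2) • (1 + i • (1 ⊗ 𝔰_κ))` in the complexification. -/
noncomputable def iotaM {n : ℕ} (Q : QuadraticForm ℝ (EuclideanSpace ℝ (Fin n)))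
    (v : EuclideanSpace ℝ (Fin n)) : ℂ ⊗[ℝ] CliffordAlgebra Q :=
  (1/2 : ℝ) • (1 + Complex.I • ((1 : ℂ) ⊗ₜ[ℝ] CliffordAlgebra.ι Q (‖v‖⁻¹ • v)))

namespace CompleteOrthogonalIdempotents

variable {R A I : Type*} [CommSemiring R] [Semiring A] [Algebra R A] [Fintype I] {e : I → A}

theorem sum_smul_mul_sum_smul (he : CompleteOrthogonalIdempotents e) (c d : I → R) :
    (∑ i, c i • e i) * (∑ i, d i • e i) = ∑ i, (c i * d i) • e i := by
  classical
  simp [Finset.sum_mul_sum, he.mul_eq, smul_smul, mul_comm]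

theorem sum_smul_pow (he : CompleteOrthogonalIdempotents e) (c : I → R) (m : ℕ) :
    (∑ i, c i • e i) ^ m = ∑ i, c i ^ m • e i := by
  induction m with
  | zero => simp [he.complete]
  | succ m ih => simp only [pow_succ, ih, he.sum_smul_mul_sum_smul]

theorem sum_mul_sum_smul_pow (he : CompleteOrthogonalIdempotents e) (c : I → R)
    (s : Finset ℕ) (b : ℕ → A) :
    ∑ m ∈ s, b m * (∑ i, c i • e i) ^ m = ∑ i, (∑ m ∈ s, c i ^ m • b m) * e i := by
  simp only [he.sum_smul_pow, Finset.mul_sum, Finset.sum_mul, mul_smul_comm, smul_mul_assoc]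
  exact Finset.sum_comm

end CompleteOrthogonalIdempotents

section SquareRootOfMinusOne

variable {K A : Type*} [Field K] [Ring A] [Algebra K A] {u : A} {a : K}

theorem completeOrthogonalIdempotents_half_smul_one_sub_add (hu : u * u = -1) (ha : a * a = -1)
    (h2 : (2 : K) ≠ 0) :
    CompleteOrthogonalIdempotents ![(2⁻¹ : K) • (1 - a • u), (2⁻¹ : K) • (1 + a • u)] := by
  refine CompleteOrthogonalIdempotents.pair_iff'ₛ.mpr ⟨?_, ?_, ?_⟩
  · simp only [smul_mul_smul_comm, sub_mul, mul_add, one_mul, mul_one, hu, ha]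
    module
  · simp only [smul_mul_smul_comm, mul_sub, add_mul, one_mul, mul_one, hu, ha]
    module
  · match_scalars <;> field_simp <;> ring

theorem smul_one_add_smul_eq (ha : a * a = -1) (h2 : (2 : K) ≠ 0) (c r : K) :
    c • (1 : A) + r • u
      = (c + r * a) • (2⁻¹ : K) • (1 - a • u) + (c - r * a) • (2⁻¹ : K) • (1 + a • u) := by
  match_scalars
  · field_simp
    ring
  · field_simp
    linear_combination (2 * r) * ha

end SquareRootOfMinusOne

theorem CliffordAlgebra.one_tmul_ι_mul_self {R S M : Type*} [CommRing R] [Ring S] [Algebra R S]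
    [AddCommGroup M] [Module R M] (Q : QuadraticForm R M) {w : M} (hw : Q w = -1) :
    ((1 : S) ⊗ₜ[R] ι Q w) * ((1 : S) ⊗ₜ[R] ι Q w) = -1 := by
  rw [Algebra.TensorProduct.tmul_mul_tmul, ι_sq_scalar, hw, map_neg, map_one, one_mul,
    TensorProduct.tmul_neg, Algebra.TensorProduct.one_def]

section Paravector

variable {n : ℕ} (Q : QuadraticForm ℝ (EuclideanSpace ℝ (Fin n))) (x : ℝ)
  {v : EuclideanSpace ℝ (Fin n)}

theorem quadraticForm_inv_norm_smul (hQ : ∀ w, Q w = -‖w‖ ^ 2) (hv : v ≠ 0) :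
    Q (‖v‖⁻¹ • v) = -1 := by
  rw [hQ, norm_smul, norm_inv, norm_norm, inv_mul_cancel₀ (norm_ne_zero_iff.mpr hv), one_pow]

theorem one_tmul_paravec (hv : v ≠ 0) :
    (1 : ℂ) ⊗ₜ[ℝ] paravec Q x v
      = (x : ℂ) • 1 + (‖v‖ : ℂ) • (1 : ℂ) ⊗ₜ[ℝ] CliffordAlgebra.ι Q (‖v‖⁻¹ • v) := by
  have hιv : CliffordAlgebra.ι Q v = ‖v‖ • CliffordAlgebra.ι Q (‖v‖⁻¹ • v) := by
    rw [← map_smul, smul_inv_smul₀ (norm_ne_zero_iff.mpr hv)]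
  rw [paravec, TensorProduct.tmul_add, hιv, Algebra.algebraMap_eq_smul_one, TensorProduct.tmul_smul,
    TensorProduct.tmul_smul, Algebra.TensorProduct.one_def, Complex.coe_smul, Complex.coe_smul]
  rfl

theorem iotaP_eq :
    iotaP Q v = (2⁻¹ : ℂ) • (1 - Complex.I • (1 : ℂ) ⊗ₜ[ℝ] CliffordAlgebra.ι Q (‖v‖⁻¹ • v)) := by
  rw [iotaP, ← algebraMap_smul ℂ, one_div, map_inv₀, map_ofNat]

theorem iotaM_eq :
    iotaM Q v = (2⁻¹ : ℂ) • (1 + Complex.I • (1 : ℂ) ⊗ₜ[ℝ] CliffordAlgebra.ι Q (‖v‖⁻¹ • v)) := by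
  rw [iotaM, ← algebraMap_smul ℂ, one_div, map_inv₀, map_ofNat]

end Paravector

theorem stmt6_general {n : ℕ}
    (Q : QuadraticForm ℝ (EuclideanSpace ℝ (Fin n)))
    (hQ : ∀ v : EuclideanSpace ℝ (Fin n), Q v = -‖v‖ ^ 2)
    (x : ℝ) (v : EuclideanSpace ℝ (Fin n)) (hv : v ≠ 0) :
    (∀ m : ℕ, ((1 : ℂ) ⊗ₜ[ℝ] paravec Q x v) ^ m
        = sPlus x v ^ m • iotaP Q v + sMinus x v ^ m • iotaM Q v) ∧
    (∀ (N : ℕ) (a : ℕ → CliffordAlgebra Q),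
      ∑ m ∈ Finset.range (N + 1),
          ((1 : ℂ) ⊗ₜ[ℝ] a m) * ((1 : ℂ) ⊗ₜ[ℝ] paravec Q x v) ^ m
        = (∑ m ∈ Finset.range (N + 1), sPlus x v ^ m • ((1 : ℂ) ⊗ₜ[ℝ] a m)) * iotaP Q v
          + (∑ m ∈ Finset.range (N + 1), sMinus x v ^ m • ((1 : ℂ) ⊗ₜ[ℝ] a m)) * iotaM Q v) := by
  have hu := CliffordAlgebra.one_tmul_ι_mul_self (S := ℂ) Q (quadraticForm_inv_norm_smul Q hQ hv)
  have he := completeOrthogonalIdempotents_half_smul_one_sub_add hu Complex.I_mul_I two_ne_zero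
  rw [← iotaP_eq, ← iotaM_eq] at he
  have hκ : (1 : ℂ) ⊗ₜ[ℝ] paravec Q x v
      = ∑ i, ![sPlus x v, sMinus x v] i • ![iotaP Q v, iotaM Q v] i := by
    rw [one_tmul_paravec Q x hv, smul_one_add_smul_eq Complex.I_mul_I two_ne_zero, ← iotaP_eq,
      ← iotaM_eq, Fin.sum_univ_two]
    rfl
  refine ⟨fun m ↦ ?_, fun N a ↦ ?_⟩
  · rw [hκ, he.sum_smul_pow, Fin.sum_univ_two]
    rfl
  · rw [hκ, he.sum_mul_sum_smul_pow, Fin.sum_univ_two]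
    rfl

/-- `(1 ⊗ κ)^m = s₊(κ)^m • ι₊(κ) + s₋(κ)^m • ι₋(κ)` for every `m`, and the
evaluation of polynomials with Clifford coefficients at `κ` via the idempotents. -/
theorem stmt6 {n : ℕ} (hn : 1 ≤ n)
    (Q : QuadraticForm ℝ (EuclideanSpace ℝ (Fin n)))
    (hQ : ∀ v : EuclideanSpace ℝ (Fin n), Q v = -‖v‖ ^ 2)
    (x : ℝ) (v : EuclideanSpace ℝ (Fin n)) (hv : v ≠ 0) :
    (∀ m : ℕ, ((1 : ℂ) ⊗ₜ[ℝ] paravec Q x v) ^ m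
        = sPlus x v ^ m • iotaP Q v + sMinus x v ^ m • iotaM Q v) ∧
    (∀ (N : ℕ) (a : ℕ → CliffordAlgebra Q),
      ∑ m ∈ Finset.range (N + 1),
          ((1 : ℂ) ⊗ₜ[ℝ] a m) * ((1 : ℂ) ⊗ₜ[ℝ] paravec Q x v) ^ m
        = (∑ m ∈ Finset.range (N + 1), sPlus x v ^ m • ((1 : ℂ) ⊗ₜ[ℝ] a m)) * iotaP Q v
          + (∑ m ∈ Finset.range (N + 1), sMinus x v ^ m • ((1 : ℂ) ⊗ₜ[ℝ] a m)) * iotaM Q v) :=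
  stmt6_general Q hQ x v hv
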